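/- Let H be a shortest path graph and let K be a maximal clique in H. Then every vertex of H not in K is adjacent to at most one vertex of K. -/

import Mathlib

/-!
Shortest path graphs contain no induced diamond: geodesics are compared position by position,
and in a triangle of such words all three pairs differ at one and the same position, so two
words adjacent to both ends of an edge agree off that position and are adjacent themselves.
In a graph without induced diamonds, a vertex outside a clique that sees two of its members
sees all of them, so the clique was not maximal.
-/

open SimpleGraph

variable {V : Type*}

/-- An `(a,b)`-geodesic in `G`: a shortest path from `a` to `b`. -/
def Geodesic (G : SimpleGraph V) (a b : V) : Type _ :=
  {p : G.Walk a b // p.IsPath ∧ p.length = G.dist a b}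

/-- The set of index levels at which two geodesics differ
(position `i` in the support list is index level `i`; position `0` is `a`). -/
def diffIndices (G : SimpleGraph V) (a b : V) (U W : Geodesic G a b) : Set ℕ :=
  {i | U.1.support[i]? ≠ W.1.support[i]?}

/-- The shortest path graph `S(G,a,b)`: vertices are the `(a,b)`-geodesics,
two geodesics being adjacent iff they differ at exactly one index level. -/
def SPG (G : SimpleGraph V) (a b : V) : SimpleGraph (Geodesic G a b) where
  Adj U W := ∃! i, i ∈ diffIndices G a b U W
  symm := by
    constructor
    rintro U W ⟨i, hi, hu⟩
    exact ⟨i, Ne.symm hi, fun j hj => hu j (Ne.symm hj)⟩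
  loopless := by
    constructor
    rintro U ⟨i, hi, -⟩
    exact hi rfl

namespace SimpleGraph

/-- Every diamond (two triangles sharing the edge `u v`) closes up into a `K₄`. -/
def InducedDiamondFree {X : Type*} (H : SimpleGraph X) : Prop :=
  ∀ ⦃x y u v⦄, H.Adj u v → H.Adj x u → H.Adj x v → H.Adj y u → H.Adj y v → x ≠ y → H.Adj x y

theorem InducedDiamondFree.comap {X Y : Type*} {H : SimpleGraph Y} (hH : H.InducedDiamondFree)
    {f : X → Y} (hf : f.Injective) : (H.comap f).InducedDiamondFree :=
  fun _ _ _ _ huv hxu hxv hyu hyv hxy => hH huv hxu hxv hyu hyv (hf.ne hxy)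

theorem InducedDiamondFree.eq_of_adj_of_adj_of_isClique {X : Type*} {H : SimpleGraph X}
    (hH : H.InducedDiamondFree) {K : Set X} (hK : H.IsClique K)
    (hmax : ∀ K', H.IsClique K' → K ⊆ K' → K' = K) {x : X} (hx : x ∉ K)
    {w₁ w₂ : X} (hw₁ : w₁ ∈ K) (hw₂ : w₂ ∈ K) (h₁ : H.Adj x w₁) (h₂ : H.Adj x w₂) : w₁ = w₂ := by
  by_contra hne
  have hw₁₂ : H.Adj w₁ w₂ := hK hw₁ hw₂ hne
  have hadj : ∀ w ∈ K, x ≠ w → H.Adj x w := by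
    intro w hw hxw
    rcases eq_or_ne w w₁ with rfl | hww₁
    · exact h₁
    rcases eq_or_ne w w₂ with rfl | hww₂
    · exact h₂
    exact hH hw₁₂ h₁ h₂ (hK hw hw₁ hww₁) (hK hw hw₂ hww₂) hxw
  have hins : insert x K = K := hmax _ (isClique_insert.2 ⟨hK, hadj⟩) (Set.subset_insert x K)
  exact hx (hins ▸ Set.mem_insert x K)

def hammingGraph (ι β : Type*) : SimpleGraph (ι → β) where
  Adj x y := ∃! i, x i ≠ y i
  symm := ⟨fun _ _ ⟨i, hi, hu⟩ => ⟨i, Ne.symm hi, fun j hj => hu j (Ne.symm hj)⟩⟩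
  loopless := ⟨fun _ ⟨_, hi, _⟩ => hi rfl⟩

namespace hammingGraph

variable {ι β : Type*} {x y z : ι → β}

theorem eq_of_adj_of_ne (h : (hammingGraph ι β).Adj x y) {i j : ι} (hi : x i ≠ y i)
    (hji : j ≠ i) : x j = y j :=
  not_not.1 fun hj => hji (h.unique hj hi)

theorem eq_of_adj_of_adj_of_adj (hxy : (hammingGraph ι β).Adj x y)
    (hxz : (hammingGraph ι β).Adj x z) (hyz : (hammingGraph ι β).Adj y z) {i j : ι}
    (hi : y i ≠ z i) (hji : j ≠ i) : x j = y j := by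
  obtain ⟨k, hk⟩ := hxy.exists
  suffices hki : k = i by exact eq_of_adj_of_ne hxy (hki ▸ hk) hji
  by_contra hki
  have hxzk : x k ≠ z k := by rwa [← eq_of_adj_of_ne hyz hi hki]
  have hxyi : x i = y i := eq_of_adj_of_ne hxy hk (Ne.symm hki)
  have hxzi : x i = z i := eq_of_adj_of_ne hxz hxzk (Ne.symm hki)
  exact hi (hxyi ▸ hxzi)

theorem inducedDiamondFree : (hammingGraph ι β).InducedDiamondFree := by
  intro x y u v huv hxu hxv hyu hyv hxy
  obtain ⟨i, hi⟩ := huv.exists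
  have hagree : ∀ j ≠ i, x j = y j := fun j hj => by
    rw [eq_of_adj_of_adj_of_adj hxu hxv huv hi hj, eq_of_adj_of_adj_of_adj hyu hyv huv hi hj]
  obtain ⟨j, hj⟩ := Function.ne_iff.1 hxy
  obtain rfl : j = i := by_contra fun hji => hj (hagree j hji)
  exact ⟨j, hj, fun k hk => by_contra fun hkj => hk (hagree k hkj)⟩

end hammingGraph

end SimpleGraph

theorem SPG_eq_comap_hammingGraph (G : SimpleGraph V) (a b : V) :
    SPG G a b = (hammingGraph ℕ (Option V)).comap fun U i => U.1.support[i]? :=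
  rfl

theorem SPG_inducedDiamondFree (G : SimpleGraph V) (a b : V) : (SPG G a b).InducedDiamondFree := by
  rw [SPG_eq_comap_hammingGraph]
  refine hammingGraph.inducedDiamondFree.comap fun U W h => Subtype.ext (Walk.ext_support ?_)
  exact List.ext_getElem? (congrFun h)

theorem stmt_2_general {V : Type*} (G : SimpleGraph V) (a b : V)
    (K : Set (Geodesic G a b)) (hK : (SPG G a b).IsClique K)
    (hmax : ∀ K', (SPG G a b).IsClique K' → K ⊆ K' → K' = K)
    (U : Geodesic G a b) (hU : U ∉ K) :
    ∀ W₁ ∈ K, ∀ W₂ ∈ K, (SPG G a b).Adj U W₁ → (SPG G a b).Adj U W₂ → W₁ = W₂ :=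
  fun _ hW₁ _ hW₂ => (SPG_inducedDiamondFree G a b).eq_of_adj_of_adj_of_isClique hK hmax hU hW₁ hW₂

/-- a vertex outside a maximal clique has at most one neighbor in it. -/
theorem stmt_2 {V : Type*} (G : SimpleGraph V) (a b : V) (hab : a ≠ b)
    (K : Set (Geodesic G a b)) (hK : (SPG G a b).IsClique K)
    (hmax : ∀ K', (SPG G a b).IsClique K' → K ⊆ K' → K' = K)
    (U : Geodesic G a b) (hU : U ∉ K) :
    ∀ W₁ ∈ K, ∀ W₂ ∈ K, (SPG G a b).Adj U W₁ → (SPG G a b).Adj U W₂ → W₁ = W₂ :=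
  stmt_2_general G a b K hK hmax U hU
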